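/- Let x ∈ E, let H : E →L[ℝ] E be a continuous linear operator, let α ∈ [0, 1], and let z ∈ E satisfy H z = −α ∇f(x). Then ‖∇f(x + z)‖ ≤ (1 − α)·‖∇f(x)‖ + ‖∇²f(x) − H‖·‖z‖ + (L/2)·‖z‖². -/

import Mathlib

open InnerProductSpace Set

theorem ContDiff.gradient {F : Type*} [NormedAddCommGroup F] [InnerProductSpace ℝ F]
    [CompleteSpace F] {f : F → ℝ} {n : WithTop ℕ∞} (hf : ContDiff ℝ (n + 1) f) :
    ContDiff ℝ n (gradient f) :=
  (toDual ℝ F).symm.contDiff.comp (hf.fderiv_right le_rfl)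

/-- The remainder `g (x + t • z) - g x - t • g' x z` along the segment vanishes at `t = 0` and has
derivative `g' (x + t • z) z - g' x z`, which the Lipschitz bound controls by `L ‖z‖² t`. -/
theorem norm_sub_sub_fderiv_le_of_lipschitz_fderiv {E F : Type*} [NormedAddCommGroup E]
    [NormedSpace ℝ E] [NormedAddCommGroup F] [NormedSpace ℝ F] {g : E → F} (hg : Differentiable ℝ g)
    {L : ℝ} {x : E} (hlip : ∀ y, ‖fderiv ℝ g y - fderiv ℝ g x‖ ≤ L * ‖y - x‖) (z : E) :
    ‖g (x + z) - g x - fderiv ℝ g x z‖ ≤ L / 2 * ‖z‖ ^ 2 := by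
  set A := fderiv ℝ g x
  set φ : ℝ → F := fun t => g (x + t • z) - g x - t • A z
  have hφ : ∀ t, HasDerivAt φ (fderiv ℝ g (x + t • z) z - A z) t := fun t => by
    have hline : HasDerivAt (fun s : ℝ => x + s • z) z t := by
      simpa using ((hasDerivAt_id t).smul_const z).const_add x
    have hcomp := (hg (x + t • z)).hasFDerivAt.comp_hasDerivAt t hline
    have hlin : HasDerivAt (fun s : ℝ => s • A z) (A z) t := by
      simpa using (hasDerivAt_id t).smul_const (A z)
    exact (hcomp.sub_const (g x)).sub hlin
  have hbound : ∀ t ∈ Ico (0 : ℝ) 1, ‖fderiv ℝ g (x + t • z) z - A z‖ ≤ L * ‖z‖ ^ 2 * t := by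
    intro t ht
    calc ‖fderiv ℝ g (x + t • z) z - A z‖ ≤ ‖fderiv ℝ g (x + t • z) - A‖ * ‖z‖ :=
          (fderiv ℝ g (x + t • z) - A).le_opNorm z
      _ ≤ L * ‖t • z‖ * ‖z‖ := by
          gcongr
          simpa using hlip (x + t • z)
      _ = L * ‖z‖ ^ 2 * t := by
          rw [norm_smul, Real.norm_of_nonneg ht.1]; ring
  have hB : ∀ t, HasDerivAt (fun t => L * ‖z‖ ^ 2 * t ^ 2 / 2) (L * ‖z‖ ^ 2 * t) t := fun t =>
    (((hasDerivAt_pow 2 t).const_mul (L * ‖z‖ ^ 2)).div_const 2).congr_deriv (by ring)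
  have h1 := image_norm_le_of_norm_deriv_right_le_deriv_boundary
    (fun t _ => (hφ t).continuousAt.continuousWithinAt) (fun t _ => (hφ t).hasDerivWithinAt)
    (by simp [φ]) hB hbound (right_mem_Icc.2 zero_le_one)
  have h1' : ‖g (x + z) - g x - A z‖ ≤ L * ‖z‖ ^ 2 / 2 := by simpa [φ] using h1
  linarith

theorem norm_le_of_inexact_newton_step {E : Type*} [NormedAddCommGroup E] [NormedSpace ℝ E]
    {A H : E →L[ℝ] E} {v w z : E} {α : ℝ} (hα : α ≤ 1) (hz : H z = -α • v) :
    ‖w‖ ≤ (1 - α) * ‖v‖ + ‖A - H‖ * ‖z‖ + ‖w - v - A z‖ := by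
  have hdecomp : w = (1 - α) • v + (A - H) z + (w - v - A z) := by
    rw [sub_apply, hz, sub_smul, one_smul, neg_smul]
    abel
  calc ‖w‖ ≤ ‖(1 - α) • v‖ + ‖(A - H) z‖ + ‖w - v - A z‖ := by
        conv_lhs => rw [hdecomp]
        exact norm_add₃_le
    _ ≤ (1 - α) * ‖v‖ + ‖A - H‖ * ‖z‖ + ‖w - v - A z‖ := by
      rw [norm_smul, Real.norm_of_nonneg (by linarith)]
      gcongr
      exact (A - H).le_opNorm z

theorem inexact_newton_one_step_general (p : ℕ)
    (f : EuclideanSpace ℝ (Fin p) → ℝ) (hf : ContDiff ℝ 2 f)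
    (L : ℝ)
    (hlip : ∀ x y : EuclideanSpace ℝ (Fin p),
      ‖fderiv ℝ (gradient f) x - fderiv ℝ (gradient f) y‖ ≤ L * ‖x - y‖)
    (x z : EuclideanSpace ℝ (Fin p))
    (H : EuclideanSpace ℝ (Fin p) →L[ℝ] EuclideanSpace ℝ (Fin p))
    (α : ℝ) (hα1 : α ≤ 1)
    (hz : H z = -α • gradient f x) :
    ‖gradient f (x + z)‖ ≤
      (1 - α) * ‖gradient f x‖ + ‖fderiv ℝ (gradient f) x - H‖ * ‖z‖
        + L / 2 * ‖z‖ ^ 2 := by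
  have hg : Differentiable ℝ (gradient f) :=
    (ContDiff.gradient (n := 1) hf).differentiable one_ne_zero
  calc ‖gradient f (x + z)‖
      ≤ (1 - α) * ‖gradient f x‖ + ‖fderiv ℝ (gradient f) x - H‖ * ‖z‖
        + ‖gradient f (x + z) - gradient f x - fderiv ℝ (gradient f) x z‖ :=
        norm_le_of_inexact_newton_step hα1 hz
    _ ≤ _ := by
      gcongr
      exact norm_sub_sub_fderiv_le_of_lipschitz_fderiv hg (fun y => hlip y x) z

theorem inexact_newton_one_step (p : ℕ) (hp : 1 ≤ p)
    (f : EuclideanSpace ℝ (Fin p) → ℝ) (hf : ContDiff ℝ 2 f)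
    (L : ℝ) (hL : 0 < L)
    (hlip : ∀ x y : EuclideanSpace ℝ (Fin p),
      ‖fderiv ℝ (gradient f) x - fderiv ℝ (gradient f) y‖ ≤ L * ‖x - y‖)
    (x z : EuclideanSpace ℝ (Fin p))
    (H : EuclideanSpace ℝ (Fin p) →L[ℝ] EuclideanSpace ℝ (Fin p))
    (α : ℝ) (hα0 : 0 ≤ α) (hα1 : α ≤ 1)
    (hz : H z = -α • gradient f x) :
    ‖gradient f (x + z)‖ ≤
      (1 - α) * ‖gradient f x‖ + ‖fderiv ℝ (gradient f) x - H‖ * ‖z‖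
        + L / 2 * ‖z‖ ^ 2 :=
  inexact_newton_one_step_general p f hf L hlip x z H α hα1 hz
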